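/- arXiv:1704.01449 — 5 statements merged into one kernel-verified Lean document; each statement's English description precedes it below -/
import Mathlib

section
/- Let n, m ≥ 1, let A_0,…,A_m ∈ ℂ^{n×n} and Δ_0,…,Δ_m ∈ ℂ^{n×n}, and set P(z) = Σ_{j=0}^m A_j z^j and P'(z) = Σ_{j=1}^m j A_j z^{j-1}. Let λ₀ ∈ ℂ, let x₀, y₀ ∈ ℂ^n be unit vectors with y₀^H P(λ₀) = 0 and y₀^H P'(λ₀) x₀ ≠ 0. Suppose λ : ℝ → ℂ and x : ℝ → ℂ^n are differentiable at 0 with λ(0) = λ₀, x(0) = x₀, and Σ_{j=0}^m (A_j + ε Δ_j) λ(ε)^j x(ε) = 0 for all ε in a neighborhood of 0. Then λ'(0) = - ( Σ_{j=0}^m λ₀^j (y₀^H Δ_j x₀) ) / ( y₀^H P'(λ₀) x₀ ). -/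
/-!
Differentiating `∑ⱼ λ(ε)ʲ (Aⱼ + ε Δⱼ) x(ε) = 0` at `ε = 0` gives
`λ'(0) P'(λ₀) x₀ + P(λ₀) x'(0) + (∑ⱼ λ₀ʲ Δⱼ) x₀ = 0`. Pairing with the left eigenvector `y₀`
kills the term containing the unknown `x'(0)`, and `y₀ᴴ P'(λ₀) x₀ ≠ 0` lets one solve for `λ'(0)`.
-/

open Matrix Finset

section MatrixPolynomial

variable {ι R : Type*} [Fintype ι] [CommSemiring R]

def evalMatPoly (m : ℕ) (A : ℕ → Matrix ι ι R) (z : R) : Matrix ι ι R :=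
  ∑ j ∈ range (m + 1), z ^ j • A j

def derivMatPoly (m : ℕ) (A : ℕ → Matrix ι ι R) (z : R) : Matrix ι ι R :=
  ∑ j ∈ range (m + 1), ((j : R) * z ^ (j - 1)) • A j

lemma dotProduct_evalMatPoly_mulVec (m : ℕ) (A : ℕ → Matrix ι ι R) (z : R) (u v : ι → R) :
    u ⬝ᵥ (evalMatPoly m A z *ᵥ v) = ∑ j ∈ range (m + 1), z ^ j * (u ⬝ᵥ (A j *ᵥ v)) := by
  simp only [evalMatPoly, sum_mulVec, dotProduct_sum, smul_mulVec, dotProduct_smul, smul_eq_mul]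

end MatrixPolynomial

theorem HasDerivAt.const_mulVec {𝕜 𝔸 ι κ : Type*} [NontriviallyNormedField 𝕜]
    [NormedCommRing 𝔸] [NormedAlgebra 𝕜 𝔸] [Fintype ι] [Fintype κ]
    (M : Matrix κ ι 𝔸) {x : 𝕜 → ι → 𝔸} {x' : ι → 𝔸} {t : 𝕜} (hx : HasDerivAt x x' t) :
    HasDerivAt (fun s => M *ᵥ x s) (M *ᵥ x') t :=
  hasDerivAt_pi.2 fun i => HasDerivAt.fun_sum fun k _ => (hasDerivAt_pi.1 hx k).const_mul (M i k)

theorem hasDerivAt_perturbed_residual {n m : ℕ} (A Δ : ℕ → Matrix (Fin n) (Fin n) ℂ)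
    {lam : ℝ → ℂ} {lam' : ℂ} {x : ℝ → Fin n → ℂ} {x' : Fin n → ℂ} {t : ℝ}
    (hlam : HasDerivAt lam lam' t) (hx : HasDerivAt x x' t) :
    HasDerivAt (fun ε : ℝ => ∑ j ∈ range (m + 1), lam ε ^ j • (A j + (ε : ℂ) • Δ j) *ᵥ x ε)
      (lam' • derivMatPoly m (fun j => A j + (t : ℂ) • Δ j) (lam t) *ᵥ x t
        + evalMatPoly m (fun j => A j + (t : ℂ) • Δ j) (lam t) *ᵥ x'
        + evalMatPoly m Δ (lam t) *ᵥ x t) t := by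
  have hofReal : HasDerivAt (fun ε : ℝ => (ε : ℂ)) 1 t := hasDerivAt_id t |>.ofReal_comp
  have hterm : ∀ j, HasDerivAt (fun ε : ℝ => lam ε ^ j • (A j + (ε : ℂ) • Δ j) *ᵥ x ε)
      (lam t ^ j • ((A j + (t : ℂ) • Δ j) *ᵥ x' + Δ j *ᵥ x t)
        + ((j : ℂ) * lam t ^ (j - 1) * lam') • (A j + (t : ℂ) • Δ j) *ᵥ x t) t := by
    intro j
    have hmat : HasDerivAt (fun ε : ℝ => (A j + (ε : ℂ) • Δ j) *ᵥ x ε)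
        ((A j + (t : ℂ) • Δ j) *ᵥ x' + Δ j *ᵥ x t) t := by
      simp only [add_mulVec, smul_mulVec]
      simpa only [one_smul, add_assoc] using
        (hx.const_mulVec (A j)).fun_add (hofReal.fun_smul (hx.const_mulVec (Δ j)))
    exact (hlam.pow j).smul hmat
  refine (HasDerivAt.fun_sum fun j _ => hterm j).congr_deriv ?_
  simp only [evalMatPoly, derivMatPoly, add_mulVec, sum_mulVec, smul_mulVec, smul_add,
    sum_add_distrib, Finset.smul_sum, smul_smul, mul_comm lam', mul_right_comm _ (t : ℂ) lam']
  abel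

theorem statement_0_general {n m : ℕ}
    (A Δ : ℕ → Matrix (Fin n) (Fin n) ℂ)
    (lam₀ lam' : ℂ) (x₀ y₀ : Fin n → ℂ)
    (hleft : Matrix.vecMul (star y₀) (∑ j ∈ Finset.range (m + 1), lam₀ ^ j • A j) = 0)
    (hsimple : dotProduct (star y₀)
      (Matrix.mulVec (∑ j ∈ Finset.range (m + 1), ((j : ℂ) * lam₀ ^ (j - 1)) • A j) x₀) ≠ 0)
    (lam : ℝ → ℂ) (x : ℝ → Fin n → ℂ) (x' : Fin n → ℂ)
    (hlam : HasDerivAt lam lam' 0) (hx : HasDerivAt x x' 0)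
    (hlam0 : lam 0 = lam₀) (hx0 : x 0 = x₀)
    (heq : ∀ᶠ ε in nhds (0 : ℝ), ∑ j ∈ Finset.range (m + 1),
      lam ε ^ j • Matrix.mulVec (A j + (ε : ℂ) • Δ j) (x ε) = 0) :
    lam' = -(∑ j ∈ Finset.range (m + 1),
        lam₀ ^ j * dotProduct (star y₀) (Matrix.mulVec (Δ j) x₀)) /
      dotProduct (star y₀)
        (Matrix.mulVec (∑ j ∈ Finset.range (m + 1), ((j : ℂ) * lam₀ ^ (j - 1)) • A j) x₀) := by
  have hderiv := hasDerivAt_perturbed_residual (m := m) A Δ hlam hx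
  simp only [Complex.ofReal_zero, zero_smul, add_zero, hlam0, hx0] at hderiv
  have hvanish : lam' • derivMatPoly m A lam₀ *ᵥ x₀ + evalMatPoly m A lam₀ *ᵥ x'
      + evalMatPoly m Δ lam₀ *ᵥ x₀ = 0 :=
    hderiv.unique ((hasDerivAt_const 0 0).congr_of_eventuallyEq heq)
  have hx'_term : star y₀ ⬝ᵥ (evalMatPoly m A lam₀ *ᵥ x') = 0 := by
    rw [dotProduct_mulVec, evalMatPoly, hleft, zero_dotProduct]
  have hpaired := congrArg (star y₀ ⬝ᵥ ·) hvanish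
  simp only [dotProduct_add, dotProduct_smul, hx'_term, add_zero, dotProduct_zero, smul_eq_mul,
    dotProduct_evalMatPoly_mulVec] at hpaired
  rw [eq_div_iff hsimple]
  exact eq_neg_of_add_eq_zero_left hpaired

/-- first-order perturbation formula for a simple eigenvalue of a
matrix polynomial `P(z) = ∑_{j=0}^m A_j z^j` under the perturbation
`∑_{j=0}^m (A_j + ε Δ_j) z^j`. -/
theorem statement_0 {n m : ℕ} (hn : 1 ≤ n) (hm : 1 ≤ m)
    (A Δ : ℕ → Matrix (Fin n) (Fin n) ℂ)
    (lam₀ lam' : ℂ) (x₀ y₀ : Fin n → ℂ)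
    (hx₀ : ∑ i, ‖x₀ i‖ ^ 2 = 1) (hy₀ : ∑ i, ‖y₀ i‖ ^ 2 = 1)
    (hleft : Matrix.vecMul (star y₀) (∑ j ∈ Finset.range (m + 1), lam₀ ^ j • A j) = 0)
    (hsimple : dotProduct (star y₀)
      (Matrix.mulVec (∑ j ∈ Finset.range (m + 1), ((j : ℂ) * lam₀ ^ (j - 1)) • A j) x₀) ≠ 0)
    (lam : ℝ → ℂ) (x : ℝ → Fin n → ℂ) (x' : Fin n → ℂ)
    (hlam : HasDerivAt lam lam' 0) (hx : HasDerivAt x x' 0)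
    (hlam0 : lam 0 = lam₀) (hx0 : x 0 = x₀)
    (heq : ∀ᶠ ε in nhds (0 : ℝ), ∑ j ∈ Finset.range (m + 1),
      lam ε ^ j • Matrix.mulVec (A j + (ε : ℂ) • Δ j) (x ε) = 0) :
    lam' = -(∑ j ∈ Finset.range (m + 1),
        lam₀ ^ j * dotProduct (star y₀) (Matrix.mulVec (Δ j) x₀)) /
      dotProduct (star y₀)
        (Matrix.mulVec (∑ j ∈ Finset.range (m + 1), ((j : ℂ) * lam₀ ^ (j - 1)) • A j) x₀) :=
  statement_0_general A Δ lam₀ lam' x₀ y₀ hleft hsimple lam x x' hlam hx hlam0 hx0 heq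
end

section
/- Let n, m ≥ 1, let λ ∈ ℂ, let x, y ∈ ℂ^n be unit vectors, let ω_0,…,ω_m ≥ 0, and let η ∈ ℂ with |η| = 1. Define Δ_j = η ω_j e^{-i j arg(λ)} y x^H for j = 0,…,m, where y x^H is the rank-one matrix with entries y_i \overline{x_j}. Then ‖Δ_j‖_F = ω_j for every j, and | Σ_{j=0}^m λ^j (y^H Δ_j x) | = Σ_{j=0}^m ω_j |λ|^j. -/
/-
The perturbation `Δ_j` is the rank-one matrix `y xᴴ` scaled by `c_j = η ω_j e^{-i j arg λ}`.
Since `|c_j| = ω_j` and `y`, `x` are unit vectors, `‖Δ_j‖_F = |c_j| ‖y‖ ‖x‖ = ω_j` and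
`yᴴ Δ_j x = c_j (yᴴ y)(xᴴ x) = c_j`. The phase factor is chosen so that
`λ^j e^{-i j arg λ} = |λ|^j`, hence every term `λ^j c_j = η ω_j |λ|^j` has the same phase `η`,
and the modulus of the sum is the sum of the moduli.
-/

noncomputable def frobNorm {n : ℕ} (M : Matrix (Fin n) (Fin n) ℂ) : ℝ :=
  Real.sqrt (∑ i, ∑ j, ‖M i j‖ ^ 2)

open Matrix Complex

section RankOne

variable {n : ℕ}

theorem frobNorm_smul (c : ℂ) (M : Matrix (Fin n) (Fin n) ℂ) :
    frobNorm (c • M) = ‖c‖ * frobNorm M := by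
  simp only [frobNorm, Matrix.smul_apply, smul_eq_mul, norm_mul, mul_pow, ← Finset.mul_sum]
  rw [Real.sqrt_mul (by positivity), Real.sqrt_sq (norm_nonneg c)]

theorem frobNorm_vecMulVec_star (y x : Fin n → ℂ) :
    frobNorm (vecMulVec y (star x)) =
      Real.sqrt (∑ i, ‖y i‖ ^ 2) * Real.sqrt (∑ i, ‖x i‖ ^ 2) := by
  simp only [frobNorm, vecMulVec_apply, Pi.star_apply, norm_mul, norm_star, mul_pow,
    ← Finset.mul_sum, ← Finset.sum_mul]
  exact Real.sqrt_mul (Finset.sum_nonneg fun i _ => by positivity) _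

theorem dotProduct_smul_vecMulVec_mulVec {α ι : Type*} [CommSemiring α] [Fintype ι]
    (c : α) (z u v w : ι → α) :
    z ⬝ᵥ (c • vecMulVec u v) *ᵥ w = c * (z ⬝ᵥ u) * (v ⬝ᵥ w) := by
  rw [smul_mulVec, vecMulVec_mulVec, op_smul_eq_smul, dotProduct_smul, dotProduct_smul,
    smul_eq_mul, smul_eq_mul]
  ring

end RankOne

theorem star_dotProduct_self_eq_sum_norm_sq {𝕜 ι : Type*} [RCLike 𝕜] [Fintype ι]
    (v : ι → 𝕜) : star v ⬝ᵥ v = ((∑ i, ‖v i‖ ^ 2 : ℝ) : 𝕜) := by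
  simp [dotProduct, RCLike.conj_mul]

theorem norm_exp_neg_I_mul_arg (lam : ℂ) (j : ℕ) :
    ‖exp (-(I * j * lam.arg))‖ = 1 := by
  rw [show -(I * j * lam.arg) = ((-(j * lam.arg) : ℝ) : ℂ) * I by push_cast; ring]
  exact norm_exp_ofReal_mul_I _

theorem pow_mul_exp_neg_I_mul_arg (lam : ℂ) (j : ℕ) :
    lam ^ j * exp (-(I * j * lam.arg)) = ((‖lam‖ ^ j : ℝ) : ℂ) := by
  nth_rw 1 [← norm_mul_exp_arg_mul_I lam]
  rw [mul_pow, ← exp_nat_mul, mul_assoc, ← exp_add,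
    show (j : ℂ) * (lam.arg * I) + -(I * j * lam.arg) = 0 by ring, exp_zero, mul_one, ofReal_pow]

theorem statement_2_general {n m : ℕ}
    (lam : ℂ) (x y : Fin n → ℂ)
    (hx : ∑ i, ‖x i‖ ^ 2 = 1) (hy : ∑ i, ‖y i‖ ^ 2 = 1)
    (ω : ℕ → ℝ) (hω : ∀ j, j ≤ m → 0 ≤ ω j)
    (η : ℂ) (hη : ‖η‖ = 1)
    (Δ : ℕ → Matrix (Fin n) (Fin n) ℂ)
    (hΔ : ∀ j, Δ j = (η * (ω j : ℂ) *
      Complex.exp (-(Complex.I * (j : ℂ) * (lam.arg : ℂ)))) • Matrix.vecMulVec y (star x)) :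
    (∀ j, j ≤ m → frobNorm (Δ j) = ω j) ∧
    ‖∑ j ∈ Finset.range (m + 1),
        lam ^ j * dotProduct (star y) (Matrix.mulVec (Δ j) x)‖
      = ∑ j ∈ Finset.range (m + 1), ω j * ‖lam‖ ^ j := by
  have hω' : ∀ j ∈ Finset.range (m + 1), 0 ≤ ω j * ‖lam‖ ^ j := fun j hj =>
    mul_nonneg (hω j (Finset.mem_range_succ_iff.mp hj)) (by positivity)
  have hterm : ∀ j, lam ^ j * star y ⬝ᵥ Δ j *ᵥ x = η * ((ω j * ‖lam‖ ^ j : ℝ) : ℂ) := by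
    intro j
    rw [hΔ, dotProduct_smul_vecMulVec_mulVec, star_dotProduct_self_eq_sum_norm_sq, hy,
      star_dotProduct_self_eq_sum_norm_sq, hx, RCLike.ofReal_one, ofReal_mul,
      ← pow_mul_exp_neg_I_mul_arg]
    ring
  refine ⟨fun j hj => ?_, ?_⟩
  · rw [hΔ, frobNorm_smul, frobNorm_vecMulVec_star, hx, hy, norm_mul, norm_mul, hη,
      norm_exp_neg_I_mul_arg, norm_real, Real.norm_of_nonneg (hω j hj),
      Real.sqrt_one]
    ring
  · rw [Finset.sum_congr rfl fun j _ => hterm j, ← Finset.mul_sum, ← ofReal_sum, norm_mul, hη,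
      norm_real, Real.norm_of_nonneg (Finset.sum_nonneg hω'), one_mul]

/-- for the maximal perturbations `Δ_j = η ω_j e^{-i j arg(λ)} y xᴴ`
one has `‖Δ_j‖_F = ω_j` and `|∑_{j=0}^m λ^j (yᴴ Δ_j x)| = ∑_{j=0}^m ω_j |λ|^j`. -/
theorem statement_2 {n m : ℕ} (hn : 1 ≤ n) (hm : 1 ≤ m)
    (lam : ℂ) (x y : Fin n → ℂ)
    (hx : ∑ i, ‖x i‖ ^ 2 = 1) (hy : ∑ i, ‖y i‖ ^ 2 = 1)
    (ω : ℕ → ℝ) (hω : ∀ j, j ≤ m → 0 ≤ ω j)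
    (η : ℂ) (hη : ‖η‖ = 1)
    (Δ : ℕ → Matrix (Fin n) (Fin n) ℂ)
    (hΔ : ∀ j, Δ j = (η * (ω j : ℂ) *
      Complex.exp (-(Complex.I * (j : ℂ) * (lam.arg : ℂ)))) • Matrix.vecMulVec y (star x)) :
    (∀ j, j ≤ m → frobNorm (Δ j) = ω j) ∧
    ‖∑ j ∈ Finset.range (m + 1),
        lam ^ j * dotProduct (star y) (Matrix.mulVec (Δ j) x)‖
      = ∑ j ∈ Finset.range (m + 1), ω j * ‖lam‖ ^ j :=
  statement_2_general lam x y hx hy ω hω η hη Δ hΔ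
end

section
/- (Proposition 2, bound form.) Let n, m ≥ 1, let A_0,…,A_m ∈ ℂ^{n×n}, set P(z) = Σ_{j=0}^m A_j z^j and P'(z) = Σ_{j=1}^m j A_j z^{j-1}. Let S_0,…,S_m be ℂ-linear subspaces of ℂ^{n×n}. Let λ₀ ∈ ℂ, let x₀, y₀ ∈ ℂ^n be unit vectors with y₀^H P(λ₀) = 0 and y₀^H P'(λ₀) x₀ ≠ 0. Let ω_0,…,ω_m ≥ 0 and let Δ_j ∈ S_j satisfy ‖Δ_j‖_F ≤ ω_j. Suppose λ : ℝ → ℂ and x : ℝ → ℂ^n are differentiable at 0 with λ(0) = λ₀, x(0) = x₀, and Σ_{j=0}^m (A_j + ε Δ_j) λ(ε)^j x(ε) = 0 for all ε in a neighborhood of 0. Then |λ'(0)| ≤ ( Σ_{j=0}^m ω_j ‖(y₀ x₀^H)|_{S_j}‖_F |λ₀|^j ) / | y₀^H P'(λ₀) x₀ |. -/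
/-- The Frobenius inner product of two complex matrices. -/
noncomputable def frobInner {n : ℕ} (A B : Matrix (Fin n) (Fin n) ℂ) : ℂ :=
  ∑ i, ∑ j, (starRingEnd ℂ) (A i j) * B i j

/-!
Differentiating the perturbed eigen-equation `∑ⱼ λ(ε)ʲ (Aⱼ + ε Δⱼ) x(ε) = 0` at `ε = 0` and
pairing with the left eigenvector `y₀` kills the unknown term `y₀ᴴ P(λ₀) x'(0)`, leaving
`λ'(0) · y₀ᴴ P'(λ₀) x₀ = -∑ⱼ λ₀ʲ y₀ᴴ Δⱼ x₀`. Since `Δⱼ ∈ Sⱼ`, the orthogonality of the projection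
gives `y₀ᴴ Δⱼ x₀ = ⟨y₀ x₀ᴴ, Δⱼ⟩_F = ⟨(y₀ x₀ᴴ)|_{Sⱼ}, Δⱼ⟩_F`, and Cauchy–Schwarz bounds each term
by `‖(y₀ x₀ᴴ)|_{Sⱼ}‖_F ωⱼ |λ₀|ʲ`.
-/

open Matrix Finset

section Frobenius

variable {n : ℕ}

theorem frobInner_eq_inner_toLp (A B : Matrix (Fin n) (Fin n) ℂ) :
    frobInner A B = inner ℂ (WithLp.toLp 2 fun q : Fin n × Fin n => A q.1 q.2)
      (WithLp.toLp 2 fun q : Fin n × Fin n => B q.1 q.2) := by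
  simp only [frobInner, PiLp.inner_apply, RCLike.inner_apply, Fintype.sum_prod_type]
  exact sum_congr rfl fun i _ => sum_congr rfl fun j _ => mul_comm _ _

theorem frobNorm_eq_norm_toLp (A : Matrix (Fin n) (Fin n) ℂ) :
    frobNorm A = ‖(WithLp.toLp 2 fun q : Fin n × Fin n => A q.1 q.2 :
      EuclideanSpace ℂ (Fin n × Fin n))‖ := by
  simp [frobNorm, EuclideanSpace.norm_eq, Fintype.sum_prod_type]

theorem norm_frobInner_le (A B : Matrix (Fin n) (Fin n) ℂ) :
    ‖frobInner A B‖ ≤ frobNorm A * frobNorm B := by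
  rw [frobInner_eq_inner_toLp, frobNorm_eq_norm_toLp, frobNorm_eq_norm_toLp]
  exact norm_inner_le_norm _ _

theorem frobInner_sub_left (A B C : Matrix (Fin n) (Fin n) ℂ) :
    frobInner (A - B) C = frobInner A C - frobInner B C := by
  simp [frobInner, sub_mul, sum_sub_distrib]

theorem frobInner_vecMulVec_star (x y : Fin n → ℂ) (M : Matrix (Fin n) (Fin n) ℂ) :
    frobInner (vecMulVec y (star x)) M = star y ⬝ᵥ M *ᵥ x := by
  simp [frobInner, vecMulVec, dotProduct, mulVec, mul_sum, mul_comm, mul_left_comm, mul_assoc]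

theorem norm_dotProduct_mulVec_le_of_orthogonal {S : Submodule ℂ (Matrix (Fin n) (Fin n) ℂ)}
    {x y : Fin n → ℂ} {p Δ : Matrix (Fin n) (Fin n) ℂ}
    (hproj : ∀ Z ∈ S, frobInner (vecMulVec y (star x) - p) Z = 0) (hΔ : Δ ∈ S) :
    ‖star y ⬝ᵥ Δ *ᵥ x‖ ≤ frobNorm p * frobNorm Δ := by
  have hyx : star y ⬝ᵥ Δ *ᵥ x = frobInner p Δ := by
    rw [← frobInner_vecMulVec_star, ← sub_eq_zero, ← frobInner_sub_left]
    exact hproj Δ hΔ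
  exact hyx ▸ norm_frobInner_le p Δ

end Frobenius

section FirstOrderPerturbation

variable {ι κ : Type*} [Fintype ι] [Fintype κ]

theorem hasDerivAt_mulVec (M : Matrix ι κ ℂ) {x : ℝ → κ → ℂ} {x' : κ → ℂ} {t : ℝ}
    (hx : HasDerivAt x x' t) : HasDerivAt (fun ε => M *ᵥ x ε) (M *ᵥ x') t :=
  ((mulVecLin M).toContinuousLinearMap.restrictScalars ℝ).hasFDerivAt.comp_hasDerivAt t hx

theorem hasDerivAt_add_smul_mulVec (M Δ : Matrix ι κ ℂ) {x : ℝ → κ → ℂ} {x' : κ → ℂ}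
    (hx : HasDerivAt x x' 0) :
    HasDerivAt (fun ε : ℝ => (M + (ε : ℂ) • Δ) *ᵥ x ε) (M *ᵥ x' + Δ *ᵥ x 0) 0 := by
  have hε : HasDerivAt (fun ε : ℝ => (ε : ℂ)) 1 0 := Complex.ofRealCLM.hasDerivAt
  have h := (hasDerivAt_mulVec M hx).add (hε.smul (hasDerivAt_mulVec Δ hx))
  simp only [add_mulVec, smul_mulVec]
  exact h.congr_deriv (by simp)

theorem hasDerivAt_sum_pow_smul_add_smul_mulVec (s : Finset ℕ) (A Δ : ℕ → Matrix ι κ ℂ)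
    {lam : ℝ → ℂ} {lam' : ℂ} {x : ℝ → κ → ℂ} {x' : κ → ℂ}
    (hlam : HasDerivAt lam lam' 0) (hx : HasDerivAt x x' 0) :
    HasDerivAt (fun ε : ℝ => ∑ j ∈ s, lam ε ^ j • (A j + (ε : ℂ) • Δ j) *ᵥ x ε)
      (∑ j ∈ s, (lam 0 ^ j • (A j *ᵥ x' + Δ j *ᵥ x 0)
        + (lam' * ((j : ℂ) * lam 0 ^ (j - 1))) • A j *ᵥ x 0)) 0 := by
  refine HasDerivAt.fun_sum fun j _ => ?_
  have hpow : HasDerivAt (fun ε => lam ε ^ j) (lam' * ((j : ℂ) * lam 0 ^ (j - 1))) 0 :=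
    ((hasDerivAt_pow j (lam 0)).scomp 0 hlam).congr_deriv (by simp [smul_eq_mul])
  exact (hpow.smul (hasDerivAt_add_smul_mulVec (A j) (Δ j) hx)).congr_deriv (by simp)

theorem deriv_mul_dotProduct_eq_neg_sum (s : Finset ℕ) (A Δ : ℕ → Matrix ι κ ℂ)
    {lam : ℝ → ℂ} {lam₀ lam' : ℂ} {x : ℝ → κ → ℂ} {x₀ x' : κ → ℂ} {y : ι → ℂ}
    (hleft : star y ᵥ* (∑ j ∈ s, lam₀ ^ j • A j) = 0)
    (hlam : HasDerivAt lam lam' 0) (hx : HasDerivAt x x' 0)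
    (hlam0 : lam 0 = lam₀) (hx0 : x 0 = x₀)
    (heq : ∀ᶠ ε in nhds (0 : ℝ), ∑ j ∈ s, lam ε ^ j • (A j + (ε : ℂ) • Δ j) *ᵥ x ε = 0) :
    lam' * (star y ⬝ᵥ (∑ j ∈ s, ((j : ℂ) * lam₀ ^ (j - 1)) • A j) *ᵥ x₀)
      = -∑ j ∈ s, lam₀ ^ j * (star y ⬝ᵥ Δ j *ᵥ x₀) := by
  have hderiv := hasDerivAt_sum_pow_smul_add_smul_mulVec s A Δ hlam hx
  have hzero : ∑ j ∈ s, (lam₀ ^ j • (A j *ᵥ x' + Δ j *ᵥ x₀)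
      + (lam' * ((j : ℂ) * lam₀ ^ (j - 1))) • A j *ᵥ x₀) = 0 := by
    subst hlam0 hx0
    exact hderiv.unique ((hasDerivAt_const 0 0).congr_of_eventuallyEq heq)
  have hPx' : star y ⬝ᵥ (∑ j ∈ s, lam₀ ^ j • A j) *ᵥ x' = 0 := by
    rw [dotProduct_mulVec, hleft, zero_dotProduct]
  have := congrArg (star y ⬝ᵥ ·) hzero
  simp only [dotProduct_sum, sum_mulVec, dotProduct_add, smul_mulVec, dotProduct_smul,
    smul_eq_mul, mul_add, sum_add_distrib, dotProduct_zero] at this hPx' ⊢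
  rw [mul_sum]
  simp only [mul_assoc] at this ⊢
  linear_combination this - hPx'

end FirstOrderPerturbation

theorem statement_10_general {n m : ℕ}
    (A : ℕ → Matrix (Fin n) (Fin n) ℂ)
    (S : ℕ → Submodule ℂ (Matrix (Fin n) (Fin n) ℂ))
    (lam₀ lam' : ℂ) (x₀ y₀ : Fin n → ℂ)
    (hleft : Matrix.vecMul (star y₀) (∑ j ∈ Finset.range (m + 1), lam₀ ^ j • A j) = 0)
    (hsimple : dotProduct (star y₀)
      (Matrix.mulVec (∑ j ∈ Finset.range (m + 1), ((j : ℂ) * lam₀ ^ (j - 1)) • A j) x₀) ≠ 0)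
    (p : ℕ → Matrix (Fin n) (Fin n) ℂ)
    (hproj : ∀ j, ∀ Z ∈ S j, frobInner (Matrix.vecMulVec y₀ (star x₀) - p j) Z = 0)
    (ω : ℕ → ℝ)
    (Δ : ℕ → Matrix (Fin n) (Fin n) ℂ)
    (hΔS : ∀ j, j ≤ m → Δ j ∈ S j)
    (hΔ : ∀ j, j ≤ m → frobNorm (Δ j) ≤ ω j)
    (lam : ℝ → ℂ) (x : ℝ → Fin n → ℂ) (x' : Fin n → ℂ)
    (hlam : HasDerivAt lam lam' 0) (hx : HasDerivAt x x' 0)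
    (hlam0 : lam 0 = lam₀) (hx0 : x 0 = x₀)
    (heq : ∀ᶠ ε in nhds (0 : ℝ), ∑ j ∈ Finset.range (m + 1),
      lam ε ^ j • Matrix.mulVec (A j + (ε : ℂ) • Δ j) (x ε) = 0) :
    ‖lam'‖ ≤
      (∑ j ∈ Finset.range (m + 1), ω j * frobNorm (p j) * ‖lam₀‖ ^ j) /
      ‖dotProduct (star y₀)
        (Matrix.mulVec (∑ j ∈ Finset.range (m + 1), ((j : ℂ) * lam₀ ^ (j - 1)) • A j) x₀)‖ := by
  have hterm : ∀ j ∈ range (m + 1), ‖lam₀ ^ j * (star y₀ ⬝ᵥ Δ j *ᵥ x₀)‖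
      ≤ ω j * frobNorm (p j) * ‖lam₀‖ ^ j := by
    intro j hj
    have hjm : j ≤ m := Nat.lt_succ_iff.mp (mem_range.mp hj)
    calc ‖lam₀ ^ j * (star y₀ ⬝ᵥ Δ j *ᵥ x₀)‖
        ≤ ‖lam₀‖ ^ j * (frobNorm (p j) * ω j) := by
          rw [norm_mul, norm_pow]
          gcongr
          exact (norm_dotProduct_mulVec_le_of_orthogonal (hproj j) (hΔS j hjm)).trans
            (mul_le_mul_of_nonneg_left (hΔ j hjm) (Real.sqrt_nonneg _))
      _ = ω j * frobNorm (p j) * ‖lam₀‖ ^ j := by ring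
  rw [le_div_iff₀ (norm_pos_iff.mpr hsimple), ← norm_mul,
    deriv_mul_dotProduct_eq_neg_sum _ A Δ hleft hlam hx hlam0 hx0 heq, norm_neg]
  exact (norm_sum_le _ _).trans (sum_le_sum hterm)

/-- Proposition 2, bound form: for a simple eigenvalue `lam₀` of
`P(z) = ∑_{j=0}^m A_j z^j` and structured perturbations `Δ_j ∈ S_j` with
`‖Δ_j‖_F ≤ ω_j`,
`|λ'(0)| ≤ (∑_{j=0}^m ω_j ‖(y₀ x₀ᴴ)|_{S_j}‖_F |lam₀|^j) / |y₀ᴴ P'(lam₀) x₀|`.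
Here `p j` is the orthogonal projection of `y₀ x₀ᴴ` onto `S_j` (characterized by
`p j ∈ S_j` and `y₀ x₀ᴴ - p j ⟂ S_j` w.r.t. the Frobenius inner product). -/
theorem statement_10 {n m : ℕ} (hn : 1 ≤ n) (hm : 1 ≤ m)
    (A : ℕ → Matrix (Fin n) (Fin n) ℂ)
    (S : ℕ → Submodule ℂ (Matrix (Fin n) (Fin n) ℂ))
    (lam₀ lam' : ℂ) (x₀ y₀ : Fin n → ℂ)
    (hx₀ : ∑ i, ‖x₀ i‖ ^ 2 = 1) (hy₀ : ∑ i, ‖y₀ i‖ ^ 2 = 1)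
    (hleft : Matrix.vecMul (star y₀) (∑ j ∈ Finset.range (m + 1), lam₀ ^ j • A j) = 0)
    (hsimple : dotProduct (star y₀)
      (Matrix.mulVec (∑ j ∈ Finset.range (m + 1), ((j : ℂ) * lam₀ ^ (j - 1)) • A j) x₀) ≠ 0)
    (p : ℕ → Matrix (Fin n) (Fin n) ℂ) (hpS : ∀ j, p j ∈ S j)
    (hproj : ∀ j, ∀ Z ∈ S j, frobInner (Matrix.vecMulVec y₀ (star x₀) - p j) Z = 0)
    (ω : ℕ → ℝ) (hω : ∀ j, j ≤ m → 0 ≤ ω j)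
    (Δ : ℕ → Matrix (Fin n) (Fin n) ℂ)
    (hΔS : ∀ j, j ≤ m → Δ j ∈ S j)
    (hΔ : ∀ j, j ≤ m → frobNorm (Δ j) ≤ ω j)
    (lam : ℝ → ℂ) (x : ℝ → Fin n → ℂ) (x' : Fin n → ℂ)
    (hlam : HasDerivAt lam lam' 0) (hx : HasDerivAt x x' 0)
    (hlam0 : lam 0 = lam₀) (hx0 : x 0 = x₀)
    (heq : ∀ᶠ ε in nhds (0 : ℝ), ∑ j ∈ Finset.range (m + 1),
      lam ε ^ j • Matrix.mulVec (A j + (ε : ℂ) • Δ j) (x ε) = 0) :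
    ‖lam'‖ ≤
      (∑ j ∈ Finset.range (m + 1), ω j * frobNorm (p j) * ‖lam₀‖ ^ j) /
      ‖dotProduct (star y₀)
        (Matrix.mulVec (∑ j ∈ Finset.range (m + 1), ((j : ℂ) * lam₀ ^ (j - 1)) • A j) x₀)‖ :=
  statement_10_general A S lam₀ lam' x₀ y₀ hleft hsimple p hproj ω Δ hΔS hΔ lam x x' hlam hx hlam0
    hx0 heq
end

section
/- (Proposition 2, attainment.) Let n, m ≥ 1, let A_0,…,A_m ∈ ℂ^{n×n}, set P(z) = Σ_{j=0}^m A_j z^j and P'(z) = Σ_{j=1}^m j A_j z^{j-1}. Let S_0,…,S_m be ℂ-linear subspaces of ℂ^{n×n}. Let λ₀ ∈ ℂ, let x₀, y₀ ∈ ℂ^n be unit vectors with y₀^H P(λ₀) = 0, y₀^H P'(λ₀) x₀ ≠ 0, and (y₀ x₀^H)|_{S_j} ≠ 0 for each j. Let ω_0,…,ω_m ≥ 0, let η ∈ ℂ with |η| = 1, and define the maximal structured perturbations Δ_j = η ω_j e^{-i j arg(λ₀)} (y₀ x₀^H)|_{S_j} / ‖(y₀ x₀^H)|_{S_j}‖_F.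 Suppose λ : ℝ → ℂ and x : ℝ → ℂ^n are differentiable at 0 with λ(0) = λ₀, x(0) = x₀, and Σ_{j=0}^m (A_j + ε Δ_j) λ(ε)^j x(ε) = 0 for all ε in a neighborhood of 0. Then |λ'(0)| = ( Σ_{j=0}^m ω_j ‖(y₀ x₀^H)|_{S_j}‖_F |λ₀|^j ) / | y₀^H P'(λ₀) x₀ |. -/
/-!
Apply `y₀ᴴ` to the eigen-equation and differentiate at `ε = 0`: since `y₀ᴴ P(λ₀) = 0` the term
involving `x'(0)` drops out, leaving `λ'(0) · y₀ᴴ P'(λ₀) x₀ + Σ_j λ₀^j y₀ᴴ Δ_j x₀ = 0`.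
Because `p_j` is the Frobenius projection of `y₀ x₀ᴴ`, `y₀ᴴ p_j x₀ = ⟨y₀ x₀ᴴ, p_j⟩_F = ‖p_j‖_F²`,
and the phase `e^{-i j arg λ₀}` turns `λ₀^j` into `|λ₀|^j`; so all terms of the sum point in
the direction `η`, and `Σ_j λ₀^j y₀ᴴ Δ_j x₀ = η Σ_j ω_j ‖p_j‖_F |λ₀|^j` has exactly that modulus.
-/

open Matrix Finset

section Frobenius

variable {n : ℕ}

theorem frobInner_self (M : Matrix (Fin n) (Fin n) ℂ) :
    frobInner M M = ((frobNorm M ^ 2 : ℝ) : ℂ) := by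
  rw [frobNorm, Real.sq_sqrt (by positivity)]
  push_cast
  refine sum_congr rfl fun i _ => sum_congr rfl fun j _ => ?_
  rw [mul_comm, Complex.mul_conj']

theorem star_dotProduct_mulVec_eq_frobInner (x y : Fin n → ℂ) (M : Matrix (Fin n) (Fin n) ℂ) :
    star y ⬝ᵥ M *ᵥ x = frobInner (vecMulVec y (star x)) M := by
  simp only [frobInner, dotProduct, mulVec, vecMulVec_apply, Pi.star_apply, map_mul, mul_sum,
    Complex.star_def, Complex.conj_conj]
  exact sum_congr rfl fun i _ => sum_congr rfl fun k _ => by ring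

theorem star_dotProduct_mulVec_eq_frobNorm_sq {x y : Fin n → ℂ} {q : Matrix (Fin n) (Fin n) ℂ}
    (h : frobInner (vecMulVec y (star x) - q) q = 0) :
    star y ⬝ᵥ q *ᵥ x = ((frobNorm q ^ 2 : ℝ) : ℂ) := by
  have : frobInner (vecMulVec y (star x)) q = frobInner q q := by
    simpa only [frobInner, Matrix.sub_apply, map_sub, sub_mul, sum_sub_distrib, sub_eq_zero] using h
  rw [star_dotProduct_mulVec_eq_frobInner, this, frobInner_self]

theorem star_dotProduct_div_frobNorm_smul_mulVec {x y : Fin n → ℂ}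
    {q : Matrix (Fin n) (Fin n) ℂ} (h : frobInner (vecMulVec y (star x) - q) q = 0) (c : ℂ) :
    star y ⬝ᵥ ((c / frobNorm q) • q) *ᵥ x = c * frobNorm q := by
  rw [smul_mulVec, dotProduct_smul, smul_eq_mul, star_dotProduct_mulVec_eq_frobNorm_sq h]
  rcases eq_or_ne (frobNorm q : ℂ) 0 with h0 | h0
  · simp [h0]
  · push_cast
    field_simp

end Frobenius

theorem pow_mul_exp_neg_arg (z : ℂ) (j : ℕ) :
    z ^ j * Complex.exp (-(Complex.I * j * z.arg)) = (‖z‖ : ℂ) ^ j := by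
  have hphase : -(Complex.I * j * z.arg) = j * (-(z.arg * Complex.I)) := by ring
  rw [hphase, Complex.exp_nat_mul, ← mul_pow]
  congr 1
  nth_rewrite 1 [← Complex.norm_mul_exp_arg_mul_I z]
  rw [mul_assoc, ← Complex.exp_add, add_neg_cancel, Complex.exp_zero, mul_one]

theorem HasDerivAt.const_dotProduct {ι 𝕜 𝔸 : Type*} [Fintype ι] [NontriviallyNormedField 𝕜]
    [NormedCommRing 𝔸] [NormedAlgebra 𝕜 𝔸] {x : 𝕜 → ι → 𝔸} {x' : ι → 𝔸} {t : 𝕜}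
    (w : ι → 𝔸) (hx : HasDerivAt x x' t) :
    HasDerivAt (fun s => w ⬝ᵥ x s) (w ⬝ᵥ x') t :=
  HasDerivAt.fun_sum fun i _ => (hasDerivAt_pi.mp hx i).const_mul (w i)

section Perturbation

variable {n : ℕ} {x : ℝ → Fin n → ℂ} {x' : Fin n → ℂ} (y : Fin n → ℂ)

theorem hasDerivAt_star_dotProduct_add_smul_mulVec (A Δ : Matrix (Fin n) (Fin n) ℂ)
    (hx : HasDerivAt x x' 0) :
    HasDerivAt (fun ε : ℝ => star y ⬝ᵥ (A + (ε : ℂ) • Δ) *ᵥ x ε)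
      (star y ⬝ᵥ A *ᵥ x' + star y ⬝ᵥ Δ *ᵥ x 0) 0 := by
  have hε : HasDerivAt (fun ε : ℝ => (ε : ℂ)) 1 0 := (hasDerivAt_id 0).ofReal_comp
  have h := (hx.const_dotProduct (star y ᵥ* A)).fun_add
    (hε.fun_mul (hx.const_dotProduct (star y ᵥ* Δ)))
  refine (h.congr_deriv ?_).congr_of_eventuallyEq (.of_forall fun ε => ?_)
  · simp [dotProduct_mulVec]
  · simp only [add_mulVec, smul_mulVec, dotProduct_add, dotProduct_smul, smul_eq_mul,
      dotProduct_mulVec]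

theorem hasDerivAt_star_dotProduct_sum_pow_smul_mulVec (s : Finset ℕ)
    (A Δ : ℕ → Matrix (Fin n) (Fin n) ℂ) {lam : ℝ → ℂ} {lam' : ℂ}
    (hlam : HasDerivAt lam lam' 0) (hx : HasDerivAt x x' 0) :
    HasDerivAt (fun ε : ℝ => star y ⬝ᵥ ∑ j ∈ s, lam ε ^ j • (A j + (ε : ℂ) • Δ j) *ᵥ x ε)
      (lam' * (star y ⬝ᵥ (∑ j ∈ s, ((j : ℂ) * lam 0 ^ (j - 1)) • A j) *ᵥ x 0)
        + star y ⬝ᵥ (∑ j ∈ s, lam 0 ^ j • A j) *ᵥ x'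
        + ∑ j ∈ s, lam 0 ^ j * (star y ⬝ᵥ Δ j *ᵥ x 0)) 0 := by
  have h := HasDerivAt.fun_sum (u := s) fun j _ =>
    (hlam.fun_pow j).fun_mul (hasDerivAt_star_dotProduct_add_smul_mulVec y (A j) (Δ j) hx)
  refine (h.congr_deriv ?_).congr_of_eventuallyEq (.of_forall fun ε => ?_)
  · simp only [Complex.ofReal_zero, zero_smul, add_zero, sum_mulVec, smul_mulVec,
      dotProduct_sum, dotProduct_smul, smul_eq_mul, mul_sum, ← sum_add_distrib]
    exact sum_congr rfl fun j _ => by ring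
  · simp only [dotProduct_sum, dotProduct_smul, smul_eq_mul]

end Perturbation

theorem statement_11_general {n m : ℕ}
    (A : ℕ → Matrix (Fin n) (Fin n) ℂ)
    (S : ℕ → Submodule ℂ (Matrix (Fin n) (Fin n) ℂ))
    (lam₀ lam' : ℂ) (x₀ y₀ : Fin n → ℂ)
    (hleft : Matrix.vecMul (star y₀) (∑ j ∈ Finset.range (m + 1), lam₀ ^ j • A j) = 0)
    (hsimple : dotProduct (star y₀)
      (Matrix.mulVec (∑ j ∈ Finset.range (m + 1), ((j : ℂ) * lam₀ ^ (j - 1)) • A j) x₀) ≠ 0)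
    (p : ℕ → Matrix (Fin n) (Fin n) ℂ) (hpS : ∀ j, p j ∈ S j)
    (hproj : ∀ j, ∀ Z ∈ S j, frobInner (Matrix.vecMulVec y₀ (star x₀) - p j) Z = 0)
    (ω : ℕ → ℝ) (hω : ∀ j, j ≤ m → 0 ≤ ω j)
    (η : ℂ) (hη : ‖η‖ = 1)
    (Δ : ℕ → Matrix (Fin n) (Fin n) ℂ)
    (hΔ : ∀ j, Δ j = ((η * (ω j : ℂ) *
      Complex.exp (-(Complex.I * (j : ℂ) * (lam₀.arg : ℂ)))) / (frobNorm (p j) : ℂ)) • p j)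
    (lam : ℝ → ℂ) (x : ℝ → Fin n → ℂ) (x' : Fin n → ℂ)
    (hlam : HasDerivAt lam lam' 0) (hx : HasDerivAt x x' 0)
    (hlam0 : lam 0 = lam₀) (hx0 : x 0 = x₀)
    (heq : ∀ᶠ ε in nhds (0 : ℝ), ∑ j ∈ Finset.range (m + 1),
      lam ε ^ j • Matrix.mulVec (A j + (ε : ℂ) • Δ j) (x ε) = 0) :
    ‖lam'‖ =
      (∑ j ∈ Finset.range (m + 1), ω j * frobNorm (p j) * ‖lam₀‖ ^ j) /
      ‖dotProduct (star y₀)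
        (Matrix.mulVec (∑ j ∈ Finset.range (m + 1), ((j : ℂ) * lam₀ ^ (j - 1)) • A j) x₀)‖ := by
  set T := ∑ j ∈ range (m + 1), ω j * frobNorm (p j) * ‖lam₀‖ ^ j
  have hderiv := hasDerivAt_star_dotProduct_sum_pow_smul_mulVec y₀ (range (m + 1)) A Δ hlam hx
  rw [hlam0, hx0] at hderiv
  have hzero := hderiv.unique <| (hasDerivAt_const (0 : ℝ) (0 : ℂ)).congr_of_eventuallyEq <|
    heq.mono fun ε hε => by simp only [hε, dotProduct_zero]
  have hP : star y₀ ⬝ᵥ (∑ j ∈ range (m + 1), lam₀ ^ j • A j) *ᵥ x' = 0 := by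
    rw [dotProduct_mulVec, hleft, zero_dotProduct]
  have hΔsum : ∑ j ∈ range (m + 1), lam₀ ^ j * (star y₀ ⬝ᵥ Δ j *ᵥ x₀) = η * T := by
    simp only [T, Complex.ofReal_sum, Complex.ofReal_mul, Complex.ofReal_pow, mul_sum]
    refine sum_congr rfl fun j _ => ?_
    rw [hΔ j, star_dotProduct_div_frobNorm_smul_mulVec (hproj j _ (hpS j))]
    linear_combination (η * ω j * frobNorm (p j)) * pow_mul_exp_neg_arg lam₀ j
  have hT : 0 ≤ T := sum_nonneg fun j hj =>
    mul_nonneg (mul_nonneg (hω j (mem_range_succ_iff.mp hj)) (Real.sqrt_nonneg _)) (by positivity)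
  rw [hP, hΔsum, add_zero] at hzero
  rw [eq_div_iff (norm_ne_zero_iff.mpr hsimple), ← norm_mul, eq_neg_of_add_eq_zero_left hzero,
    norm_neg, norm_mul, hη, one_mul, Complex.norm_of_nonneg hT]

/-- Proposition 2, attainment: for the maximal structured
perturbations `Δ_j = η ω_j e^{-i j arg(lam₀)} (y₀ x₀ᴴ)|_{S_j} / ‖(y₀ x₀ᴴ)|_{S_j}‖_F`,
`|λ'(0)| = (∑_{j=0}^m ω_j ‖(y₀ x₀ᴴ)|_{S_j}‖_F |lam₀|^j) / |y₀ᴴ P'(lam₀) x₀|`.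
Here `p j` is the orthogonal projection of `y₀ x₀ᴴ` onto `S_j` (characterized by
`p j ∈ S_j` and `y₀ x₀ᴴ - p j ⟂ S_j` w.r.t. the Frobenius inner product). -/
theorem statement_11 {n m : ℕ} (hn : 1 ≤ n) (hm : 1 ≤ m)
    (A : ℕ → Matrix (Fin n) (Fin n) ℂ)
    (S : ℕ → Submodule ℂ (Matrix (Fin n) (Fin n) ℂ))
    (lam₀ lam' : ℂ) (x₀ y₀ : Fin n → ℂ)
    (hx₀ : ∑ i, ‖x₀ i‖ ^ 2 = 1) (hy₀ : ∑ i, ‖y₀ i‖ ^ 2 = 1)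
    (hleft : Matrix.vecMul (star y₀) (∑ j ∈ Finset.range (m + 1), lam₀ ^ j • A j) = 0)
    (hsimple : dotProduct (star y₀)
      (Matrix.mulVec (∑ j ∈ Finset.range (m + 1), ((j : ℂ) * lam₀ ^ (j - 1)) • A j) x₀) ≠ 0)
    (p : ℕ → Matrix (Fin n) (Fin n) ℂ) (hpS : ∀ j, p j ∈ S j)
    (hproj : ∀ j, ∀ Z ∈ S j, frobInner (Matrix.vecMulVec y₀ (star x₀) - p j) Z = 0)
    (hpne : ∀ j, j ≤ m → p j ≠ 0)
    (ω : ℕ → ℝ) (hω : ∀ j, j ≤ m → 0 ≤ ω j)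
    (η : ℂ) (hη : ‖η‖ = 1)
    (Δ : ℕ → Matrix (Fin n) (Fin n) ℂ)
    (hΔ : ∀ j, Δ j = ((η * (ω j : ℂ) *
      Complex.exp (-(Complex.I * (j : ℂ) * (lam₀.arg : ℂ)))) / (frobNorm (p j) : ℂ)) • p j)
    (lam : ℝ → ℂ) (x : ℝ → Fin n → ℂ) (x' : Fin n → ℂ)
    (hlam : HasDerivAt lam lam' 0) (hx : HasDerivAt x x' 0)
    (hlam0 : lam 0 = lam₀) (hx0 : x 0 = x₀)
    (heq : ∀ᶠ ε in nhds (0 : ℝ), ∑ j ∈ Finset.range (m + 1),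
      lam ε ^ j • Matrix.mulVec (A j + (ε : ℂ) • Δ j) (x ε) = 0) :
    ‖lam'‖ =
      (∑ j ∈ Finset.range (m + 1), ω j * frobNorm (p j) * ‖lam₀‖ ^ j) /
      ‖dotProduct (star y₀)
        (Matrix.mulVec (∑ j ∈ Finset.range (m + 1), ((j : ℂ) * lam₀ ^ (j - 1)) • A j) x₀)‖ :=
  statement_11_general A S lam₀ lam' x₀ y₀ hleft hsimple p hpS hproj ω hω η hη Δ hΔ lam x x' hlam hx
    hlam0 hx0 heq
end

section
/- Let n, m ≥ 1, A_0,…,A_m ∈ ℂ^{n×n}, weights ω_0,…,ω_m ≥ 0, and ε > 0, and define the ε-pseudospectrum Λ_ε(P) = { z ∈ ℂ : ∃ Δ_0,…,Δ_m ∈ ℂ^{n×n} with ‖Δ_j‖_F ≤ ω_j for all j and det(Σ_{j=0}^m (A_j + ε Δ_j) z^j) = 0 }. If det(A_m + ε Δ_m) ≠ 0 for every Δ_m ∈ ℂ^{n×n} with ‖Δ_m‖_F ≤ ω_m, then Λ_ε(P) is a bounded subset of ℂ. -/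
attribute [local instance] Matrix.frobeniusNormedAddCommGroup Matrix.frobeniusNormedSpace

open Finset

lemma frobNorm_eq_norm {n : ℕ} (M : Matrix (Fin n) (Fin n) ℂ) : frobNorm M = ‖M‖ := by
  simp only [frobNorm, Matrix.frobenius_norm_def, Real.sqrt_eq_rpow, Real.rpow_two]

section Polynomial

variable {𝕜 E : Type*}

lemma sum_range_succ_pow_smul_eq_pow_smul [Field 𝕜] [AddCommGroup E] [Module 𝕜 E]
    {z : 𝕜} (hz : z ≠ 0) (m : ℕ) (B : ℕ → E) :
    ∑ j ∈ range (m + 1), z ^ j • B j =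
      z ^ m • (B m + ∑ j ∈ range m, z⁻¹ ^ (m - j) • B j) := by
  have hpow : ∀ j ≤ m, z ^ j = z ^ m * z⁻¹ ^ (m - j) := fun j hj => by
    rw [← Nat.add_sub_cancel' hj, pow_add, Nat.add_sub_cancel_left, mul_assoc, ← mul_pow,
      mul_inv_cancel₀ hz, one_pow, mul_one]
  rw [sum_range_succ, smul_add, smul_sum, add_comm]
  congr 1
  exact sum_congr rfl fun j hj => by rw [smul_smul, ← hpow j (mem_range.mp hj).le]

lemma norm_sum_inv_pow_smul_le [NormedField 𝕜] [SeminormedAddCommGroup E] [NormedSpace 𝕜 E]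
    {z : 𝕜} (hz : 1 ≤ ‖z‖) (m : ℕ) (B : ℕ → E) :
    ‖∑ j ∈ range m, z⁻¹ ^ (m - j) • B j‖ ≤ (∑ j ∈ range m, ‖B j‖) / ‖z‖ := by
  have hinv : ‖z⁻¹‖ ≤ 1 := by rw [norm_inv]; exact inv_le_one_of_one_le₀ hz
  rw [div_eq_inv_mul, mul_sum, ← norm_inv]
  refine (norm_sum_le _ _).trans (sum_le_sum fun j hj => ?_)
  rw [norm_smul, norm_pow]
  gcongr
  exact pow_le_of_le_one (norm_nonneg _) hinv (Nat.sub_ne_zero_of_lt (mem_range.mp hj))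

end Polynomial

section Determinant

variable {𝕜 ι : Type*} [NormedField 𝕜] [Fintype ι] [DecidableEq ι]

lemma exists_pos_forall_dist_lt_det_ne_zero {K : Set (Matrix ι ι 𝕜)} (hK : IsCompact K)
    (hdet : ∀ N ∈ K, N.det ≠ 0) :
    ∃ δ > 0, ∀ N ∈ K, ∀ M, dist M N < δ → M.det ≠ 0 := by
  have hopen : IsOpen {M : Matrix ι ι 𝕜 | M.det ≠ 0} :=
    isOpen_compl_singleton.preimage (continuous_id.matrix_det)
  obtain ⟨δ, hδ, hsub⟩ := hK.exists_thickening_subset_open hopen hdet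
  exact ⟨δ, hδ, fun N hN M hMN => hsub (Metric.mem_thickening_iff.mpr ⟨N, hN, hMN⟩)⟩

theorem isBounded_setOf_det_sum_pow_smul_eq_zero {K : Set (Matrix ι ι 𝕜)} (hK : IsCompact K)
    (hdet : ∀ N ∈ K, N.det ≠ 0) (m : ℕ) (C : ℕ → ℝ) :
    Bornology.IsBounded {z : 𝕜 | ∃ B : ℕ → Matrix ι ι 𝕜, B m ∈ K ∧
      (∀ j < m, ‖B j‖ ≤ C j) ∧ (∑ j ∈ range (m + 1), z ^ j • B j).det = 0} := by
  obtain ⟨δ, hδ, hpert⟩ := exists_pos_forall_dist_lt_det_ne_zero hK hdet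
  refine (Metric.isBounded_closedBall (x := 0) (r := max 1 ((∑ j ∈ range m, C j) / δ))).subset ?_
  rintro z ⟨B, hBm, hBC, hzero⟩
  rw [Metric.mem_closedBall, dist_zero_right]
  by_contra! hz
  have hz1 : 1 < ‖z‖ := (le_max_left _ _).trans_lt hz
  have hzC : (∑ j ∈ range m, C j) / δ < ‖z‖ := (le_max_right _ _).trans_lt hz
  have hz0 : z ≠ 0 := norm_pos_iff.mp (one_pos.trans hz1)
  set E := ∑ j ∈ range m, z⁻¹ ^ (m - j) • B j
  have hsmall : dist (B m + E) (B m) < δ := by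
    rw [dist_eq_norm, add_sub_cancel_left]
    calc ‖E‖ ≤ (∑ j ∈ range m, ‖B j‖) / ‖z‖ := norm_sum_inv_pow_smul_le hz1.le m B
      _ ≤ (∑ j ∈ range m, C j) / ‖z‖ := by
        gcongr with j hj
        exact hBC j (mem_range.mp hj)
      _ < δ := (div_lt_iff₀ (one_pos.trans hz1)).mpr ((div_lt_iff₀' hδ).mp hzC)
  refine hpert (B m) hBm _ hsmall ?_
  rwa [sum_range_succ_pow_smul_eq_pow_smul hz0, Matrix.det_smul, mul_eq_zero,
    or_iff_right (pow_ne_zero _ (pow_ne_zero _ hz0))] at hzero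

end Determinant

theorem statement_15_general {n m : ℕ}
    (A : ℕ → Matrix (Fin n) (Fin n) ℂ)
    (ω : ℕ → ℝ)
    (ε : ℝ)
    (hAm : ∀ Δm : Matrix (Fin n) (Fin n) ℂ, frobNorm Δm ≤ ω m →
      (A m + (ε : ℂ) • Δm).det ≠ 0) :
    Bornology.IsBounded {z : ℂ | ∃ Δ : ℕ → Matrix (Fin n) (Fin n) ℂ,
      (∀ j, j ≤ m → frobNorm (Δ j) ≤ ω j) ∧
      (∑ j ∈ Finset.range (m + 1), z ^ j • (A j + (ε : ℂ) • Δ j)).det = 0} := by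
  set leading := fun Δ : Matrix (Fin n) (Fin n) ℂ => A m + (ε : ℂ) • Δ
  have hK : IsCompact (leading '' Metric.closedBall 0 (ω m)) :=
    (isCompact_closedBall _ _).image (continuous_const.add (continuous_const_smul _))
  have hdet : ∀ N ∈ leading '' Metric.closedBall 0 (ω m), N.det ≠ 0 := by
    rintro _ ⟨Δ, hΔ, rfl⟩
    exact hAm Δ (by rwa [frobNorm_eq_norm, ← dist_zero_right, ← Metric.mem_closedBall])
  refine (isBounded_setOf_det_sum_pow_smul_eq_zero hK hdet m
    fun j => ‖A j‖ + ‖(ε : ℂ)‖ * ω j).subset ?_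
  rintro z ⟨Δ, hΔ, hzero⟩
  simp_rw [frobNorm_eq_norm] at hΔ
  refine ⟨fun j => A j + (ε : ℂ) • Δ j, ⟨Δ m, by simpa using hΔ m le_rfl, rfl⟩,
    fun j hj => ?_, hzero⟩
  grw [norm_add_le, norm_smul, hΔ j hj.le]

/-- if `det(A_m + ε Δ_m) ≠ 0` for every `Δ_m` with `‖Δ_m‖_F ≤ ω_m`,
then the ε-pseudospectrum
`Λ_ε(P) = {z : ∃ Δ_0,…,Δ_m, ‖Δ_j‖_F ≤ ω_j ∧ det(∑_j (A_j + ε Δ_j) z^j) = 0}`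
is a bounded subset of ℂ. -/
theorem statement_15 {n m : ℕ} (hn : 1 ≤ n) (hm : 1 ≤ m)
    (A : ℕ → Matrix (Fin n) (Fin n) ℂ)
    (ω : ℕ → ℝ) (hω : ∀ j, j ≤ m → 0 ≤ ω j)
    (ε : ℝ) (hε : 0 < ε)
    (hAm : ∀ Δm : Matrix (Fin n) (Fin n) ℂ, frobNorm Δm ≤ ω m →
      (A m + (ε : ℂ) • Δm).det ≠ 0) :
    Bornology.IsBounded {z : ℂ | ∃ Δ : ℕ → Matrix (Fin n) (Fin n) ℂ,
      (∀ j, j ≤ m → frobNorm (Δ j) ≤ ω j) ∧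
      (∑ j ∈ Finset.range (m + 1), z ^ j • (A j + (ε : ℂ) • Δ j)).det = 0} :=
  statement_15_general A ω ε hAm
end
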